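/- Let m ≥ 1 and let p, q be monic degree-2m polynomials with all roots real. Then Q_m(p □_{2m} q) = Q_m(Sym(p)) ⊠_m Q_m(Sym(q)) ⊠_m Dil_{1/4} H_m[2, 2; 1−1/(2m), 2+1/m]. -/

import Mathlib

open Polynomial Finset

noncomputable section

namespace FFP

/-- Coefficient `e_k(p)` defined by `p(x) = Σ (-1)^k e_k(p) x^(n-k)`. -/
def eC (n k : ℕ) (p : Polynomial ℂ) : ℂ := (-1) ^ k * p.coeff (n - k)

/-- Falling factorial `x(x-1)⋯(x-k+1)`. -/
def ffa (x : ℂ) (k : ℕ) : ℂ := ∏ i ∈ Finset.range k, (x - i)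

/-- Rising factorial `x(x+1)⋯(x+k-1)`. -/
def rfa (x : ℂ) (k : ℕ) : ℂ := ∏ i ∈ Finset.range k, (x + i)

/-- Monic polynomial of degree `n` from prescribed `e_k` coefficients. -/
def ofE (n : ℕ) (f : ℕ → ℂ) : Polynomial ℂ :=
  ∑ k ∈ Finset.range (n + 1), Polynomial.C ((-1) ^ k * f k) * Polynomial.X ^ (n - k)

/-- Finite free additive convolution. -/
def boxplus (n : ℕ) (p q : Polynomial ℂ) : Polynomial ℂ :=
  ofE n fun k => ffa (n : ℂ) k * ∑ ij ∈ Finset.HasAntidiagonal.antidiagonal k,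
    eC n ij.1 p * eC n ij.2 q / (ffa (n : ℂ) ij.1 * ffa (n : ℂ) ij.2)

/-- Finite free multiplicative convolution. -/
def boxtimes (n : ℕ) (p q : Polynomial ℂ) : Polynomial ℂ :=
  ofE n fun k => eC n k p * eC n k q / (n.choose k : ℂ)

/-- Dilation: `(dil n α p)(x) = α^n p(x/α)` for polynomials of degree ≤ n. -/
def dil (n : ℕ) (α : ℂ) (p : Polynomial ℂ) : Polynomial ℂ :=
  ∑ j ∈ Finset.range (n + 1), Polynomial.C (α ^ (n - j) * p.coeff j) * Polynomial.X ^ j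

/-- Symmetrization. -/
def sym (n : ℕ) (p : Polynomial ℂ) : Polynomial ℂ := boxplus n p (dil n (-1) p)

/-- Degree halving operation. -/
def Qm (m : ℕ) (p : Polynomial ℂ) : Polynomial ℂ :=
  ofE m fun k => (-1) ^ k * eC (2 * m) (2 * k) p

/-- Degree doubling operation. -/
def Sm (p : Polynomial ℂ) : Polynomial ℂ := p.comp (Polynomial.X ^ 2)

/-- Hypergeometric polynomial `H_n[b; a]`. -/
def hyp (n : ℕ) {j i : ℕ} (b : Fin j → ℝ) (a : Fin i → ℝ) : Polynomial ℂ :=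
  ofE n fun k =>
    (n.choose k : ℂ) * (∏ t, ffa ((n : ℂ) * (b t : ℂ)) k) / ∏ s, ffa ((n : ℂ) * (a s : ℂ)) k

/-- Even hypergeometric polynomial `H^E_m[b; a](x) = H_m[b; a](x²)`. -/
def hypE (m : ℕ) {j i : ℕ} (b : Fin j → ℝ) (a : Fin i → ℝ) : Polynomial ℂ :=
  (hyp m b a).comp (Polynomial.X ^ 2)

/-- A monic polynomial of degree `2m` is even: all odd `e`-coefficients vanish. -/
def IsEvenP (m : ℕ) (p : Polynomial ℂ) : Prop :=
  ∀ k ≤ 2 * m, Odd k → eC (2 * m) k p = 0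

/-- The polynomial `z_{2m}`. -/
def zPoly (m : ℕ) : Polynomial ℂ :=
  ∑ k ∈ Finset.range (m + 1),
    Polynomial.C ((-1 : ℂ) ^ k * ((2 * m).choose (2 * k) : ℂ) * ffa ((2 * m : ℕ) : ℂ) k *
        ((k.factorial : ℂ) / ((2 * k).factorial : ℂ)) *
        ((2 * (m : ℂ) + 1 - (k : ℂ)) / (2 * (m : ℂ) + 1))) *
      Polynomial.X ^ (2 * m - 2 * k)

/-- The finite free commutator `p □_{2m} q = Sym(p) ⊠_{2m} Sym(q) ⊠_{2m} z_{2m}`. -/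
def fcomm (m : ℕ) (p q : Polynomial ℂ) : Polynomial ℂ :=
  boxtimes (2 * m) (boxtimes (2 * m) (sym (2 * m) p) (sym (2 * m) q)) (zPoly m)


lemma ffa_zero (x : ℂ) : ffa x 0 = 1 := by simp [ffa]

lemma ffa_succ (x : ℂ) (k : ℕ) : ffa x (k + 1) = ffa x k * (x - k) := by
  simp [ffa, Finset.prod_range_succ]

lemma intC_ne {a : ℤ} (h : a ≠ 0) : (a : ℂ) ≠ 0 := Int.cast_ne_zero.mpr h

lemma coeff_ofE (n : ℕ) (f : ℕ → ℂ) {k : ℕ} (hk : k ≤ n) :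
    (ofE n f).coeff (n - k) = (-1) ^ k * f k := by
  unfold ofE
  rw [Polynomial.finset_sum_coeff, Finset.sum_eq_single k]
  · rw [Polynomial.coeff_C_mul, Polynomial.coeff_X_pow, if_pos rfl, mul_one]
  · intro j hj hjk
    simp only [Polynomial.coeff_C_mul, Polynomial.coeff_X_pow]
    rw [if_neg (by simp at hj; omega), mul_zero]
  · intro h
    exact absurd (Finset.mem_range.mpr (by omega)) h

lemma eC_ofE (n : ℕ) (f : ℕ → ℂ) {k : ℕ} (hk : k ≤ n) : eC n k (ofE n f) = f k := by
  rw [eC, coeff_ofE n f hk, ← mul_assoc, ← mul_pow]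
  simp

lemma eC_boxtimes (n : ℕ) (p q : Polynomial ℂ) {k : ℕ} (hk : k ≤ n) :
    eC n k (boxtimes n p q) = eC n k p * eC n k q / (n.choose k : ℂ) :=
  eC_ofE n _ hk

lemma eC_dil (n : ℕ) (α : ℂ) (p : Polynomial ℂ) {k : ℕ} (hk : k ≤ n) :
    eC n k (dil n α p) = α ^ k * eC n k p := by
  unfold eC dil
  rw [Polynomial.finset_sum_coeff, Finset.sum_eq_single (n - k)]
  · simp only [Polynomial.coeff_C_mul, Polynomial.coeff_X_pow, if_pos rfl, mul_one]
    rw [show n - (n - k) = k from by omega]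
    simp only [eq_self_iff_true, if_true, mul_one]
    ring
  · intro j hj hjk
    simp only [Polynomial.coeff_C_mul, Polynomial.coeff_X_pow]
    rw [if_neg (fun h => hjk h.symm), mul_zero]
  · intro h
    exact absurd (Finset.mem_range.mpr (by omega)) h

lemma eC_zPoly (m : ℕ) {k : ℕ} (hk : k ≤ m) :
    eC (2 * m) (2 * k) (zPoly m) =
      (-1) ^ k * ((2 * m).choose (2 * k) : ℂ) * ffa (2 * (m : ℂ)) k *
        ((k.factorial : ℂ) / ((2 * k).factorial : ℂ)) *
        ((2 * (m : ℂ) + 1 - (k : ℂ)) / (2 * (m : ℂ) + 1)) := by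
  unfold eC zPoly
  rw [Polynomial.finset_sum_coeff, Finset.sum_eq_single k]
  · simp only [Polynomial.coeff_C_mul, Polynomial.coeff_X_pow, if_pos rfl, mul_one]
    rw [pow_mul]
    push_cast
    ring_nf
  · intro j hj hjk
    simp only [Polynomial.coeff_C_mul, Polynomial.coeff_X_pow]
    rw [if_neg (by simp at hj; omega), mul_zero]
  · intro h
    exact absurd (Finset.mem_range.mpr (by omega)) h

lemma key2 (m : ℕ) : ∀ k, k ≤ m →
    (2 * (m : ℂ) + 1 - (k : ℂ)) * (m.factorial : ℂ) * ((2 * m - 2 * k).factorial : ℂ) *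
        ffa ((m : ℂ) - 1 / 2) k * ffa (2 * (m : ℂ) + 1) k * 4 ^ k =
      (2 * (m : ℂ) + 1) * ((m - k).factorial : ℂ) * ((2 * m).factorial : ℂ) *
        ffa (2 * (m : ℂ)) k := by
  intro k
  induction k with
  | zero =>
    intro _
    simp only [Nat.cast_zero, ffa_zero, Nat.sub_zero, Nat.mul_zero, pow_zero, mul_one, sub_zero]
  | succ k ih =>
    intro hk
    have hk' : k ≤ m := Nat.le_of_succ_le hk
    have IH := ih hk'
    rw [show m - k = (m - (k+1)) + 1 from by omega, Nat.factorial_succ] at IH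
    rw [show 2*m - 2*k = (2*m - 2*(k+1)) + 1 + 1 from by omega, Nat.factorial_succ,
      Nat.factorial_succ] at IH
    have hD : ((2*(m:ℂ) - 2*(k:ℂ)) * (2*(m:ℂ) - 2*(k:ℂ) - 1)) ≠ 0 := by
      apply mul_ne_zero
      · have h : (2*(m:ℂ) - 2*(k:ℂ)) = ((2*(m:ℤ) - 2*(k:ℤ) : ℤ) : ℂ) := by push_cast; ring
        rw [h]; exact intC_ne (by omega)
      · have h : (2*(m:ℂ) - 2*(k:ℂ) - 1) = ((2*(m:ℤ) - 2*(k:ℤ) - 1 : ℤ) : ℂ) := by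
          push_cast; ring
        rw [h]; exact intC_ne (by omega)
    apply mul_right_cancel₀ hD
    rw [ffa_succ, ffa_succ, ffa_succ]
    push_cast [Nat.cast_sub (show k+1 ≤ m from hk),
      Nat.cast_sub (show 2*(k+1) ≤ 2*m from by omega)] at IH ⊢
    linear_combination (4 * (2*(m:ℂ) - (k:ℂ)) * ((m:ℂ) - 1/2 - (k:ℂ))) * IH

lemma key3 (m : ℕ) {k : ℕ} (hk : k ≤ m) :
    (2*(m:ℂ)+1-(k:ℂ)) * (m.choose k : ℂ) * ffa ((m:ℂ)-1/2) k * ffa (2*(m:ℂ)+1) k * 4^k *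
        (k.factorial : ℂ) =
      (2*(m:ℂ)+1) * ((2*m).choose (2*k) : ℂ) * ffa (2*(m:ℂ)) k * ((2*k).factorial : ℂ) := by
  have fc1 : (m.choose k : ℂ) * (k.factorial : ℂ) * ((m-k).factorial : ℂ)
      = (m.factorial : ℂ) := by
    exact_mod_cast congrArg (Nat.cast : ℕ → ℂ) (Nat.choose_mul_factorial_mul_factorial hk)
  have fc2 : ((2*m).choose (2*k) : ℂ) * ((2*k).factorial : ℂ) * ((2*m-2*k).factorial : ℂ)
      = ((2*m).factorial : ℂ) := by
    exact_mod_cast congrArg (Nat.cast : ℕ → ℂ)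
      (Nat.choose_mul_factorial_mul_factorial (show 2*k ≤ 2*m by omega))
  have hD : ((m-k).factorial : ℂ) * ((2*m-2*k).factorial : ℂ) ≠ 0 :=
    mul_ne_zero (Nat.cast_ne_zero.mpr (Nat.factorial_ne_zero _))
      (Nat.cast_ne_zero.mpr (Nat.factorial_ne_zero _))
  apply mul_right_cancel₀ hD
  linear_combination key2 m k hk
    + ((2*(m:ℂ)+1-(k:ℂ)) * ffa ((m:ℂ)-1/2) k * ffa (2*(m:ℂ)+1) k * 4^k *
        ((2*m-2*k).factorial : ℂ)) * fc1
    - ((2*(m:ℂ)+1) * ffa (2*(m:ℂ)) k * ((m-k).factorial : ℂ)) * fc2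

lemma ffa_half_ne (m k : ℕ) : ffa ((m:ℂ) - 1/2) k ≠ 0 := by
  rw [ffa]
  apply Finset.prod_ne_zero_iff.mpr
  intro i _ h
  have h2 : ((2*(m:ℤ) - 1 - 2*(i:ℤ) : ℤ) : ℂ) = 0 := by push_cast; linear_combination 2*h
  exact intC_ne (show (2*(m:ℤ) - 1 - 2*(i:ℤ) : ℤ) ≠ 0 by omega) h2

lemma ffa_2m1_ne (m k : ℕ) (hk : k ≤ 2*m+1) : ffa (2*(m:ℂ)+1) k ≠ 0 := by
  rw [ffa]
  apply Finset.prod_ne_zero_iff.mpr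
  intro i hi
  rw [Finset.mem_range] at hi
  have h : (2*(m:ℂ)+1 - (i:ℂ)) = ((2*(m:ℤ)+1 - (i:ℤ) : ℤ) : ℂ) := by push_cast; ring
  rw [h]; exact intC_ne (by omega)

lemma ffa_2m_ne (m k : ℕ) (hk : k ≤ 2*m) : ffa (2*(m:ℂ)) k ≠ 0 := by
  rw [ffa]
  apply Finset.prod_ne_zero_iff.mpr
  intro i hi
  rw [Finset.mem_range] at hi
  have h : (2*(m:ℂ) - (i:ℂ)) = ((2*(m:ℤ) - (i:ℤ) : ℤ) : ℂ) := by push_cast; ring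
  rw [h]; exact intC_ne (by omega)

lemma eC_Qm (m : ℕ) (p : Polynomial ℂ) {k : ℕ} (hk : k ≤ m) :
    eC m k (Qm m p) = (-1)^k * eC (2*m) (2*k) p :=
  eC_ofE m _ hk

lemma eC_hyp (m : ℕ) (hm : 1 ≤ m) {k : ℕ} (hk : k ≤ m) :
    eC m k (hyp m ![2, 2] ![1 - 1 / (2 * (m : ℝ)), 2 + 1 / (m : ℝ)]) =
      (m.choose k : ℂ) * (ffa (2*(m:ℂ)) k * ffa (2*(m:ℂ)) k) /
        (ffa ((m:ℂ) - 1/2) k * ffa (2*(m:ℂ)+1) k) := by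
  rw [hyp, eC_ofE m _ hk]
  have hm0 : ((m:ℝ)) ≠ 0 := Nat.cast_ne_zero.mpr (by omega)
  have hm0C : ((m:ℂ)) ≠ 0 := Nat.cast_ne_zero.mpr (by omega)
  have h1 : (m:ℂ) * (((1 - 1/(2*(m:ℝ)) : ℝ)) : ℂ) = (m:ℂ) - 1/2 := by
    push_cast
    field_simp
  have h2 : (m:ℂ) * (((2 + 1/((m:ℝ)) : ℝ)) : ℂ) = 2*(m:ℂ) + 1 := by
    push_cast
    field_simp
  have h3 : (m:ℂ) * (((2 : ℝ)) : ℂ) = 2*(m:ℂ) := by push_cast; ring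
  simp only [Fin.prod_univ_two, Matrix.cons_val_zero, Matrix.cons_val_one, Matrix.head_cons]
  rw [h1, h2, h3]

/-- even part of the finite free commutator. -/
theorem stmt15 (m : ℕ) (hm : 1 ≤ m) (p q : Polynomial ℂ)
    (hpm : p.Monic) (hpd : p.natDegree = 2 * m) (hp : ∀ z : ℂ, p.IsRoot z → z.im = 0)
    (hqm : q.Monic) (hqd : q.natDegree = 2 * m) (hq : ∀ z : ℂ, q.IsRoot z → z.im = 0) :
    Qm m (fcomm m p q) =
      boxtimes m (boxtimes m (Qm m (sym (2 * m) p)) (Qm m (sym (2 * m) q)))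
        (dil m (1 / 4) (hyp m ![2, 2] ![1 - 1 / (2 * (m : ℝ)), 2 + 1 / (m : ℝ)])) := by
  have ho : ∀ k, k ≤ m → ((-1:ℂ)) ^ k * eC (2*m) (2*k) (fcomm m p q) =
      eC m k (boxtimes m (Qm m (sym (2*m) p)) (Qm m (sym (2*m) q))) *
        eC m k (dil m (1/4) (hyp m ![2,2] ![1 - 1/(2*(m:ℝ)), 2 + 1/(m:ℝ)])) /
        (m.choose k : ℂ) := by
    intro k hk
    rw [fcomm, eC_boxtimes (2*m) _ _ (show 2*k ≤ 2*m by omega),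
        eC_boxtimes (2*m) _ _ (show 2*k ≤ 2*m by omega),
        eC_zPoly m hk,
        eC_boxtimes m _ _ hk, eC_Qm m _ hk, eC_Qm m _ hk,
        eC_dil m _ _ hk, eC_hyp m hm hk]
    have hC2 : (((2*m).choose (2*k)) : ℂ) ≠ 0 :=
      Nat.cast_ne_zero.mpr (Nat.choose_pos (show 2*k ≤ 2*m by omega)).ne'
    have hC1 : ((m.choose k) : ℂ) ≠ 0 := Nat.cast_ne_zero.mpr (Nat.choose_pos hk).ne'
    have hF1 := ffa_half_ne m k
    have hF2 := ffa_2m1_ne m k (by omega)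
    have hF3 := ffa_2m_ne m k (by omega)
    have hkf : ((2*k).factorial : ℂ) ≠ 0 := Nat.cast_ne_zero.mpr (Nat.factorial_ne_zero _)
    have h2m1 : (2*(m:ℂ)+1) ≠ 0 := by
      have h : (2*(m:ℂ)+1) = ((2*(m:ℤ)+1 : ℤ) : ℂ) := by push_cast; ring
      rw [h]; exact intC_ne (by omega)
    have h4 : ((1:ℂ)/4) ^ k = (4 ^ k)⁻¹ := by
      rw [one_div, inv_pow]
    rw [h4]
    have h4n : ((4:ℂ)) ^ k ≠ 0 := pow_ne_zero _ (by norm_num)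
    have K := key3 m hk
    generalize hG1 : ffa ((m:ℂ) - 1/2) k = F1 at hF1 K ⊢
    generalize hG2 : ffa (2*(m:ℂ)+1) k = F2 at hF2 K ⊢
    generalize hG3 : ffa (2*(m:ℂ)) k = F3 at hF3 K ⊢
    generalize hGA : eC (2*m) (2*k) (sym (2*m) p) = A
    generalize hGB : eC (2*m) (2*k) (sym (2*m) q) = B
    generalize hGs : ((-1 : ℂ)) ^ k = s
    field_simp
    linear_combination (s * s * A * B) * K
  show ofE m (fun k => (-1)^k * eC (2*m) (2*k) (fcomm m p q)) =
    ofE m (fun k => eC m k (boxtimes m (Qm m (sym (2*m) p)) (Qm m (sym (2*m) q))) *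
      eC m k (dil m (1/4) (hyp m ![2,2] ![1 - 1/(2*(m:ℝ)), 2 + 1/(m:ℝ)])) / (m.choose k : ℂ))
  unfold ofE
  refine Finset.sum_congr rfl fun k hkr => ?_
  rw [Finset.mem_range] at hkr
  simp only [ho k (by omega)]

end FFP
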